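/- Let σ > 0, α > 0, c ≥ 0, and β ∈ ℝ with β ≠ 1/2 and β ≠ 1. Define φ : (0, ∞)² → ℝ by φ(u, v) := −u^{2−2β}(v + c)^{2β−1} / ((2 − 2β)(2β − 1)σ²) − (1/α²) log v. Then for all (u, v) ∈ (0, ∞)²: ∂_u²φ = u^{−2β}(v + c)^{2β−1}/σ², ∂_u∂_vφ = −u^{1−2β}(v + c)^{2β−2}/σ², ∂_v²φ = u^{2−2β}(v + c)^{2β−3}/σ² + 1/(α²v²); the determinant of the Hessian of φ equals (1/(α²v²)) ∂_u²φ > 0, so the Hessian H(φ)(u,v) is positive definite; and its inverse has entries (H(φ)⁻¹)₁₁ = α² u² v²/(v + c)² + σ² u^{2β}(v + c)^{1−2β}, (H(φ)⁻¹)₁₂ = (H(φ)⁻¹)₂₁ = α² u v²/(v + c), (H(φ)⁻¹)₂₂ = α² v². -/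

import Mathlib

/-- The Hessian matrix of `φ : ℝ × ℝ → ℝ` at `p`, via iterated Fréchet derivatives. -/
noncomputable def hess2d (φ : ℝ × ℝ → ℝ) (p : ℝ × ℝ) : Matrix (Fin 2) (Fin 2) ℝ :=
  !![fderiv ℝ (fun q => fderiv ℝ φ q ((1 : ℝ), (0 : ℝ))) p ((1 : ℝ), (0 : ℝ)),
     fderiv ℝ (fun q => fderiv ℝ φ q ((1 : ℝ), (0 : ℝ))) p ((0 : ℝ), (1 : ℝ));
     fderiv ℝ (fun q => fderiv ℝ φ q ((0 : ℝ), (1 : ℝ))) p ((1 : ℝ), (0 : ℝ)),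
     fderiv ℝ (fun q => fderiv ℝ φ q ((0 : ℝ), (1 : ℝ))) p ((0 : ℝ), (1 : ℝ))]

/-- The stochastic-volatility CEV potential of Appendix D.2:
`φ(u,v) = −u^{2−2β}(v+c)^{2β−1}/((2−2β)(2β−1)σ²) − (1/α²) log v`. -/
noncomputable def cevPot (σ α c β : ℝ) (p : ℝ × ℝ) : ℝ :=
  -(p.1 ^ (2 - 2 * β) * (p.2 + c) ^ (2 * β - 1)) / ((2 - 2 * β) * (2 * β - 1) * σ ^ 2)
    - (1 / α ^ 2) * Real.log p.2

/-!
The first partials of `φ` are again products of powers of `u` and `v + c` (plus `-1/(α² v)` in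
`∂_v φ`), so the Hessian follows from the power rule. With `a = ∂_u²φ`, `t = u/(v + c)` and
`k = 1/(α² v²)` it reads `!![a, -a t; -a t, a t² + k] = Lᵀ diag(a, k) L` for the shear
`L = !![1, -t; 0, 1]`; since `det L = 1` this gives `det = a k > 0`, positive definiteness, and the
inverse `L⁻¹ diag(a⁻¹, k⁻¹) L⁻ᵀ`.
-/

open Filter Topology ContinuousLinearMap Matrix

theorem hess2d_eq_of_hasFDerivAt {φ φu φv : ℝ × ℝ → ℝ} {p : ℝ × ℝ} {a b c d : ℝ}
    (hφ : ∀ᶠ q in 𝓝 p, HasFDerivAt φ (φu q • fst ℝ ℝ ℝ + φv q • snd ℝ ℝ ℝ) q)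
    (hu : HasFDerivAt φu (a • fst ℝ ℝ ℝ + b • snd ℝ ℝ ℝ) p)
    (hv : HasFDerivAt φv (c • fst ℝ ℝ ℝ + d • snd ℝ ℝ ℝ) p) :
    hess2d φ p = !![a, b; c, d] := by
  have hu' : (fun q => fderiv ℝ φ q (1, 0)) =ᶠ[𝓝 p] φu :=
    hφ.mono fun q hq => by simp [hq.fderiv]
  have hv' : (fun q => fderiv ℝ φ q (0, 1)) =ᶠ[𝓝 p] φv :=
    hφ.mono fun q hq => by simp [hq.fderiv]
  simp [hess2d, hu'.fderiv_eq, hv'.fderiv_eq, hu.fderiv, hv.fderiv]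

theorem hasFDerivAt_rpow_mul_rpow_add (a b c : ℝ) {q : ℝ × ℝ} (h1 : q.1 ≠ 0)
    (h2 : q.2 + c ≠ 0) :
    HasFDerivAt (fun q : ℝ × ℝ => q.1 ^ a * (q.2 + c) ^ b)
      ((a * q.1 ^ (a - 1) * (q.2 + c) ^ b) • fst ℝ ℝ ℝ +
        (b * q.1 ^ a * (q.2 + c) ^ (b - 1)) • snd ℝ ℝ ℝ) q := by
  have hu := (Real.hasDerivAt_rpow_const (p := a) (Or.inl h1)).comp_hasFDerivAt q
    (hasFDerivAt_fst (𝕜 := ℝ))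
  have hv := (((hasDerivAt_id q.2).add_const c).rpow_const (p := b) (Or.inl h2)).comp_hasFDerivAt
    q (hasFDerivAt_snd (𝕜 := ℝ))
  refine (hu.mul hv).congr_fderiv ?_
  match_scalars <;> simp only [Function.comp_apply, id_eq] <;> ring

theorem rpow_add_natCast_mul_rpow_sub_natCast {u w : ℝ} (hu : u ≠ 0) (hw : w ≠ 0) (x y : ℝ)
    (n : ℕ) : u ^ (x + n) * w ^ (y - n) = u ^ x * w ^ y * (u / w) ^ n := by
  rw [Real.rpow_add_natCast hu, Real.rpow_sub_natCast hw, div_pow]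
  field_simp

namespace Matrix

theorem transpose_shear_mul_diagonal_mul_shear {R : Type*} [CommRing R] (a t k : R) :
    !![1, -t; 0, 1]ᵀ * diagonal ![a, k] * !![1, -t; 0, 1] =
      !![a, -(a * t); -(a * t), a * t ^ 2 + k] := by
  ext i j; fin_cases i <;> fin_cases j <;> simp [mul_apply, Fin.sum_univ_two] <;> ring

theorem det_fin_two_shear {R : Type*} [CommRing R] (a t k : R) :
    !![a, -(a * t); -(a * t), a * t ^ 2 + k].det = a * k := by
  rw [det_fin_two_of]; ring

theorem posDef_fin_two_shear {a k : ℝ} (t : ℝ) (ha : 0 < a) (hk : 0 < k) :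
    !![a, -(a * t); -(a * t), a * t ^ 2 + k].PosDef := by
  rw [← transpose_shear_mul_diagonal_mul_shear, ← conjTranspose_eq_transpose_of_trivial]
  refine (PosDef.diagonal fun i => ?_).conjTranspose_mul_mul_same ?_
  · fin_cases i <;> simpa
  · exact mulVec_injective_iff_isUnit.mpr <| (isUnit_iff_isUnit_det _).mpr (by simp)

theorem inv_fin_two_shear {K : Type*} [Field K] {a k : K} (t : K) (ha : a ≠ 0) (hk : k ≠ 0) :
    !![a, -(a * t); -(a * t), a * t ^ 2 + k]⁻¹ = !![t ^ 2 / k + a⁻¹, t / k; t / k, 1 / k] := by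
  refine inv_eq_right_inv ?_
  rw [mul_fin_two, one_fin_two]
  ext i j; fin_cases i <;> fin_cases j <;> simp <;> field_simp <;> ring

end Matrix

noncomputable def cevPotU (σ c β : ℝ) (p : ℝ × ℝ) : ℝ :=
  -(p.1 ^ (1 - 2 * β) * (p.2 + c) ^ (2 * β - 1)) / ((2 * β - 1) * σ ^ 2)

noncomputable def cevPotV (σ α c β : ℝ) (p : ℝ × ℝ) : ℝ :=
  -(p.1 ^ (2 - 2 * β) * (p.2 + c) ^ (2 * β - 2)) / ((2 - 2 * β) * σ ^ 2) - 1 / (α ^ 2 * p.2)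

section

variable {σ α c β : ℝ} {q : ℝ × ℝ}

theorem hasFDerivAt_cevPot (hβhalf : β ≠ 1 / 2) (hβone : β ≠ 1) (h1 : q.1 ≠ 0) (h2 : q.2 ≠ 0)
    (h2c : q.2 + c ≠ 0) :
    HasFDerivAt (cevPot σ α c β)
      (cevPotU σ c β q • fst ℝ ℝ ℝ + cevPotV σ α c β q • snd ℝ ℝ ℝ) q := by
  have hβ₁ : 2 * β - 1 ≠ 0 := by contrapose! hβhalf; linarith
  have hβ₂ : 2 - 2 * β ≠ 0 := by contrapose! hβone; linarith
  have hpow := (hasFDerivAt_rpow_mul_rpow_add (2 - 2 * β) (2 * β - 1) c h1 h2c).const_mul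
    (-1 / ((2 - 2 * β) * (2 * β - 1) * σ ^ 2))
  have hlog := ((Real.hasDerivAt_log h2).comp_hasFDerivAt q (hasFDerivAt_snd (𝕜 := ℝ))).const_mul
    (1 / α ^ 2)
  have hφ : cevPot σ α c β = fun y => -1 / ((2 - 2 * β) * (2 * β - 1) * σ ^ 2) *
      (y.1 ^ (2 - 2 * β) * (y.2 + c) ^ (2 * β - 1)) - 1 / α ^ 2 * Real.log y.2 := by
    funext y; simp only [cevPot]; ring
  rw [hφ]
  refine (hpow.sub hlog).congr_fderiv ?_
  rw [show 2 - 2 * β - 1 = 1 - 2 * β by ring, show 2 * β - 1 - 1 = 2 * β - 2 by ring]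
  match_scalars <;> simp only [cevPotU, cevPotV] <;> field_simp

theorem hasFDerivAt_cevPotU (hβhalf : β ≠ 1 / 2) (h1 : q.1 ≠ 0) (h2c : q.2 + c ≠ 0) :
    HasFDerivAt (cevPotU σ c β)
      ((q.1 ^ (-(2 * β)) * (q.2 + c) ^ (2 * β - 1) / σ ^ 2) • fst ℝ ℝ ℝ +
        (-(q.1 ^ (1 - 2 * β) * (q.2 + c) ^ (2 * β - 2)) / σ ^ 2) • snd ℝ ℝ ℝ) q := by
  have hβ₁ : 2 * β - 1 ≠ 0 := by contrapose! hβhalf; linarith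
  have hpow := (hasFDerivAt_rpow_mul_rpow_add (1 - 2 * β) (2 * β - 1) c h1 h2c).const_mul
    (-1 / ((2 * β - 1) * σ ^ 2))
  have hφu : cevPotU σ c β = fun y => -1 / ((2 * β - 1) * σ ^ 2) *
      (y.1 ^ (1 - 2 * β) * (y.2 + c) ^ (2 * β - 1)) := by
    funext y; simp only [cevPotU]; ring
  rw [hφu]
  refine hpow.congr_fderiv ?_
  rw [show 1 - 2 * β - 1 = -(2 * β) by ring, show 2 * β - 1 - 1 = 2 * β - 2 by ring]
  match_scalars
  · field_simp; ring
  · field_simp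

theorem hasFDerivAt_cevPotV (hβone : β ≠ 1) (h1 : q.1 ≠ 0) (h2 : q.2 ≠ 0) (h2c : q.2 + c ≠ 0) :
    HasFDerivAt (cevPotV σ α c β)
      ((-(q.1 ^ (1 - 2 * β) * (q.2 + c) ^ (2 * β - 2)) / σ ^ 2) • fst ℝ ℝ ℝ +
        (q.1 ^ (2 - 2 * β) * (q.2 + c) ^ (2 * β - 3) / σ ^ 2 + 1 / (α ^ 2 * q.2 ^ 2)) •
          snd ℝ ℝ ℝ) q := by
  have hβ₂ : 2 - 2 * β ≠ 0 := by contrapose! hβone; linarith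
  have hpow := (hasFDerivAt_rpow_mul_rpow_add (2 - 2 * β) (2 * β - 2) c h1 h2c).const_mul
    (-1 / ((2 - 2 * β) * σ ^ 2))
  have hinv := ((hasDerivAt_inv h2).comp_hasFDerivAt q (hasFDerivAt_snd (𝕜 := ℝ))).const_mul
    (1 / α ^ 2)
  have hφv : cevPotV σ α c β = fun y => -1 / ((2 - 2 * β) * σ ^ 2) *
      (y.1 ^ (2 - 2 * β) * (y.2 + c) ^ (2 * β - 2)) - 1 / α ^ 2 * y.2⁻¹ := by
    funext y; simp only [cevPotV]; ring
  rw [hφv]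
  refine (hpow.sub hinv).congr_fderiv ?_
  rw [show 2 - 2 * β - 1 = 1 - 2 * β by ring, show 2 * β - 2 - 1 = 2 * β - 3 by ring]
  match_scalars
  · field_simp
  · field_simp; ring

theorem hess2d_cevPot (hβhalf : β ≠ 1 / 2) (hβone : β ≠ 1) {p : ℝ × ℝ} (h1 : p.1 ≠ 0)
    (h2 : p.2 ≠ 0) (h2c : p.2 + c ≠ 0) :
    hess2d (cevPot σ α c β) p =
      !![p.1 ^ (-(2 * β)) * (p.2 + c) ^ (2 * β - 1) / σ ^ 2,
          -(p.1 ^ (1 - 2 * β) * (p.2 + c) ^ (2 * β - 2)) / σ ^ 2;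
        -(p.1 ^ (1 - 2 * β) * (p.2 + c) ^ (2 * β - 2)) / σ ^ 2,
          p.1 ^ (2 - 2 * β) * (p.2 + c) ^ (2 * β - 3) / σ ^ 2 + 1 / (α ^ 2 * p.2 ^ 2)] := by
  have hnear : ∀ᶠ q in 𝓝 p, q.1 ≠ 0 ∧ q.2 ≠ 0 ∧ q.2 + c ≠ 0 :=
    (continuousAt_fst.eventually_ne h1).and <| (continuousAt_snd.eventually_ne h2).and <|
      (continuousAt_snd.add continuousAt_const).eventually_ne h2c
  exact hess2d_eq_of_hasFDerivAt
    (hnear.mono fun q ⟨hq1, hq2, hq2c⟩ => hasFDerivAt_cevPot hβhalf hβone hq1 hq2 hq2c)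
    (hasFDerivAt_cevPotU hβhalf h1 h2c) (hasFDerivAt_cevPotV hβone h1 h2 h2c)

end

/-- Appendix D.2: the CEV-type Hessian martingale potential. The second
partial derivatives of `cevPot` are as computed in the paper, the Hessian is positive
definite with determinant `(1/(α²v²)) ∂_u²φ > 0`, and its inverse is the stated
stochastic-volatility CEV covariance matrix. -/
theorem cevPot_hessian (σ α c β : ℝ)
    (hσ : 0 < σ) (hα : 0 < α) (hc : 0 ≤ c)
    (hβhalf : β ≠ 1 / 2) (hβone : β ≠ 1) :
    ∀ p : ℝ × ℝ, 0 < p.1 → 0 < p.2 →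
      hess2d (cevPot σ α c β) p 0 0 =
        p.1 ^ (-(2 * β)) * (p.2 + c) ^ (2 * β - 1) / σ ^ 2 ∧
      hess2d (cevPot σ α c β) p 0 1 =
        -(p.1 ^ (1 - 2 * β) * (p.2 + c) ^ (2 * β - 2)) / σ ^ 2 ∧
      hess2d (cevPot σ α c β) p 1 0 =
        -(p.1 ^ (1 - 2 * β) * (p.2 + c) ^ (2 * β - 2)) / σ ^ 2 ∧
      hess2d (cevPot σ α c β) p 1 1 =
        p.1 ^ (2 - 2 * β) * (p.2 + c) ^ (2 * β - 3) / σ ^ 2 + 1 / (α ^ 2 * p.2 ^ 2) ∧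
      (hess2d (cevPot σ α c β) p).det =
        (1 / (α ^ 2 * p.2 ^ 2)) * hess2d (cevPot σ α c β) p 0 0 ∧
      0 < (hess2d (cevPot σ α c β) p).det ∧
      (hess2d (cevPot σ α c β) p).PosDef ∧
      (hess2d (cevPot σ α c β) p)⁻¹ =
        !![α ^ 2 * p.1 ^ 2 * p.2 ^ 2 / (p.2 + c) ^ 2 +
             σ ^ 2 * p.1 ^ (2 * β) * (p.2 + c) ^ (1 - 2 * β),
           α ^ 2 * p.1 * p.2 ^ 2 / (p.2 + c);
           α ^ 2 * p.1 * p.2 ^ 2 / (p.2 + c), α ^ 2 * p.2 ^ 2] := by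
  intro p hu hv
  have hw : 0 < p.2 + c := by linarith
  have hH₀ := hess2d_cevPot (σ := σ) (α := α) hβhalf hβone hu.ne' hv.ne' hw.ne'
  set a := p.1 ^ (-(2 * β)) * (p.2 + c) ^ (2 * β - 1) / σ ^ 2 with ha_def
  set t := p.1 / (p.2 + c)
  set k := 1 / (α ^ 2 * p.2 ^ 2)
  have ha : 0 < a := by positivity
  have hk : 0 < k := by positivity
  have hb : -(p.1 ^ (1 - 2 * β) * (p.2 + c) ^ (2 * β - 2)) / σ ^ 2 = -(a * t) := by
    rw [ha_def, neg_div, div_mul_eq_mul_div, ← pow_one t,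
      ← rpow_add_natCast_mul_rpow_sub_natCast hu.ne' hw.ne' _ _ 1]
    ring_nf
  have hd : p.1 ^ (2 - 2 * β) * (p.2 + c) ^ (2 * β - 3) / σ ^ 2 = a * t ^ 2 := by
    rw [ha_def, div_mul_eq_mul_div, ← rpow_add_natCast_mul_rpow_sub_natCast hu.ne' hw.ne' _ _ 2]
    ring_nf
  have hH : hess2d (cevPot σ α c β) p = !![a, -(a * t); -(a * t), a * t ^ 2 + k] := by
    rw [hH₀, hb, hd]
  have ha_inv : a⁻¹ = σ ^ 2 * p.1 ^ (2 * β) * (p.2 + c) ^ (1 - 2 * β) := by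
    rw [ha_def, Real.rpow_neg hu.le, show 1 - 2 * β = -(2 * β - 1) by ring, Real.rpow_neg hw.le]
    field_simp
  refine ⟨by simp [hH₀], by simp [hH₀], by simp [hH₀], by simp [hH₀], ?_, ?_, ?_, ?_⟩
  · rw [hH, det_fin_two_shear]; simp [mul_comm]
  · rw [hH, det_fin_two_shear]; positivity
  · rw [hH]; exact posDef_fin_two_shear t ha hk
  · rw [hH, inv_fin_two_shear t ha.ne' hk.ne', ha_inv]
    ext i j; fin_cases i <;> fin_cases j <;> simp [t, k] <;> field_simp
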